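/- arXiv:2106.06419 — 3 statements merged into one kernel-verified Lean document; each statement's English description precedes it below -/
import Mathlib

section
/- For any smooth compactly supported v : ℝ² → ℝ, sup_{x ∈ ℝ²} |x|^{1/2} |v(x)| ≲ ‖v‖_{L²} + ‖∂_r v‖_{L²} + ‖∂_θ v‖_{L²} + ‖∂_r ∂_θ v‖_{L²}, where ∂_r is the radial derivative and ∂_θ = x₁∂₂ - x₂∂₁ is the angular derivative. -/
open MeasureTheory Real Set

noncomputable section

/-- Partial derivative in the first coordinate. -/
def d1 (f : ℝ × ℝ → ℝ) (x : ℝ × ℝ) : ℝ := fderiv ℝ f x (1, 0)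

/-- Partial derivative in the second coordinate. -/
def d2 (f : ℝ × ℝ → ℝ) (x : ℝ × ℝ) : ℝ := fderiv ℝ f x (0, 1)

/-- Radial derivative `∂_r f = (x·∇f)/|x|`. -/
def dRad (f : ℝ × ℝ → ℝ) (x : ℝ × ℝ) : ℝ :=
  (x.1 * d1 f x + x.2 * d2 f x) / ‖x‖

/-- Angular derivative `∂_θ f = x₁ ∂₂ f - x₂ ∂₁ f`. -/
def dAng (f : ℝ × ℝ → ℝ) (x : ℝ × ℝ) : ℝ :=
  x.1 * d2 f x - x.2 * d1 f x

/-- `L²(ℝ²)` norm. -/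
def L2norm (f : ℝ × ℝ → ℝ) : ℝ := Real.sqrt (∫ x : ℝ × ℝ, (f x)^2)

/-! ### Auxiliary definitions -/

/-- Euclidean-norm radial derivative. -/
def dRadE (f : ℝ × ℝ → ℝ) (x : ℝ × ℝ) : ℝ :=
  (x.1 * d1 f x + x.2 * d2 f x) / Real.sqrt (x.1^2 + x.2^2)

/-- the polar parametrization -/
def P (s θ : ℝ) : ℝ × ℝ := (s * Real.cos θ, s * Real.sin θ)

/-- the radial derivative along the polar ray, in smooth form -/
def Arad (f : ℝ × ℝ → ℝ) (s θ : ℝ) : ℝ :=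
  Real.cos θ * d1 f (P s θ) + Real.sin θ * d2 f (P s θ)

/-- radially controlling integrand -/
def Q (f g : ℝ × ℝ → ℝ) (s θ : ℝ) : ℝ :=
  s * ((f (P s θ))^2 + (Arad f s θ)^2 + (g (P s θ))^2 + (Arad g s θ)^2) / 2

/-! ### Smoothness and support lemmas -/

lemma contDiff_d1 {f : ℝ × ℝ → ℝ} (hf : ContDiff ℝ (⊤ : ℕ∞) f) : ContDiff ℝ (⊤ : ℕ∞) (d1 f) :=
  (hf.fderiv_right (by simp)).clm_apply contDiff_const

lemma contDiff_d2 {f : ℝ × ℝ → ℝ} (hf : ContDiff ℝ (⊤ : ℕ∞) f) : ContDiff ℝ (⊤ : ℕ∞) (d2 f) :=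
  (hf.fderiv_right (by simp)).clm_apply contDiff_const

lemma contDiff_dAng {f : ℝ × ℝ → ℝ} (hf : ContDiff ℝ (⊤ : ℕ∞) f) : ContDiff ℝ (⊤ : ℕ∞) (dAng f) :=
  ((contDiff_fst.mul (contDiff_d2 hf)).sub (contDiff_snd.mul (contDiff_d1 hf)) : _)

lemma d1_eq_zero {f : ℝ × ℝ → ℝ} {x : ℝ × ℝ} (hx : x ∉ tsupport f) : d1 f x = 0 := by
  have : fderiv ℝ f x = 0 := by
    by_contra h
    exact hx (support_fderiv_subset ℝ (f := f) h)
  simp [d1, this]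

lemma d2_eq_zero {f : ℝ × ℝ → ℝ} {x : ℝ × ℝ} (hx : x ∉ tsupport f) : d2 f x = 0 := by
  have : fderiv ℝ f x = 0 := by
    by_contra h
    exact hx (support_fderiv_subset ℝ (f := f) h)
  simp [d2, this]

lemma dAng_eq_zero {f : ℝ × ℝ → ℝ} {x : ℝ × ℝ} (hx : x ∉ tsupport f) : dAng f x = 0 := by
  simp [dAng, d1_eq_zero hx, d2_eq_zero hx]

lemma dRadE_eq_zero {f : ℝ × ℝ → ℝ} {x : ℝ × ℝ} (hx : x ∉ tsupport f) : dRadE f x = 0 := by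
  simp [dRadE, d1_eq_zero hx, d2_eq_zero hx]

lemma tsupport_dAng_subset {f : ℝ × ℝ → ℝ} : tsupport (dAng f) ⊆ tsupport f := by
  apply closure_minimal _ isClosed_closure
  intro x hx
  by_contra h
  exact hx (dAng_eq_zero h)

lemma hasCompactSupport_d1 {f : ℝ × ℝ → ℝ} (hs : HasCompactSupport f) :
    HasCompactSupport (d1 f) := hs.fderiv_apply ℝ (1, 0)

lemma hasCompactSupport_d2 {f : ℝ × ℝ → ℝ} (hs : HasCompactSupport f) :
    HasCompactSupport (d2 f) := hs.fderiv_apply ℝ (0, 1)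

lemma hasCompactSupport_dAng {f : ℝ × ℝ → ℝ} (hs : HasCompactSupport f) :
    HasCompactSupport (dAng f) :=
  IsCompact.of_isClosed_subset hs isClosed_closure tsupport_dAng_subset

/-! ### Derivatives along polar curves -/

lemma fderiv_apply_eq {f : ℝ × ℝ → ℝ} (x : ℝ × ℝ) (a b : ℝ) :
    fderiv ℝ f x (a, b) = a * d1 f x + b * d2 f x := by
  have : (a, b) = a • ((1:ℝ), (0:ℝ)) + b • ((0:ℝ), (1:ℝ)) := by simp [Prod.ext_iff]
  rw [this, (fderiv ℝ f x).map_add, (fderiv ℝ f x).map_smul, (fderiv ℝ f x).map_smul]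
  simp [d1, d2]

lemma hasDerivAt_P_comp {f : ℝ × ℝ → ℝ} (hf : ContDiff ℝ (⊤ : ℕ∞) f) (s θ : ℝ) :
    HasDerivAt (fun t => f (P t θ)) (Arad f s θ) s := by
  have h1 : HasDerivAt (fun t : ℝ => P t θ) (Real.cos θ, Real.sin θ) s := by
    simpa [P] using ((hasDerivAt_id s).mul_const (Real.cos θ)).prodMk
      ((hasDerivAt_id s).mul_const (Real.sin θ))
  have h2 : HasFDerivAt f (fderiv ℝ f (P s θ)) (P s θ) :=
    (hf.differentiable (by simp) (P s θ)).hasFDerivAt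
  have := h2.comp_hasDerivAt s h1
  rw [fderiv_apply_eq] at this
  exact this

lemma hasDerivAt_P_comp_theta {f : ℝ × ℝ → ℝ} (hf : ContDiff ℝ (⊤ : ℕ∞) f) (s θ : ℝ) :
    HasDerivAt (fun φ => f (P s φ)) (dAng f (P s θ)) θ := by
  have h1 : HasDerivAt (fun φ : ℝ => P s φ) (s * (-Real.sin θ), s * Real.cos θ) θ :=
    (((Real.hasDerivAt_cos θ).const_mul s).prodMk ((Real.hasDerivAt_sin θ).const_mul s))
  have h2 : HasFDerivAt f (fderiv ℝ f (P s θ)) (P s θ) :=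
    (hf.differentiable (by simp) (P s θ)).hasFDerivAt
  have := h2.comp_hasDerivAt θ h1
  have e : dAng f (P s θ) = fderiv ℝ f (P s θ) (s * (-Real.sin θ), s * Real.cos θ) := by
    rw [fderiv_apply_eq]
    simp only [dAng, P]
    ring
  rw [e]
  exact this

lemma continuous_P : Continuous (fun q : ℝ × ℝ => P q.1 q.2) := by
  unfold P; fun_prop

lemma continuous_Arad {f : ℝ × ℝ → ℝ} (hf : ContDiff ℝ (⊤ : ℕ∞) f) :
    Continuous (fun q : ℝ × ℝ => Arad f q.1 q.2) := by
  have h1 : Continuous (d1 f) := (contDiff_d1 hf).continuous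
  have h2 : Continuous (d2 f) := (contDiff_d2 hf).continuous
  unfold Arad
  exact ((Real.continuous_cos.comp continuous_snd).mul (h1.comp continuous_P)).add
    ((Real.continuous_sin.comp continuous_snd).mul (h2.comp continuous_P))

lemma dRadE_P {f : ℝ × ℝ → ℝ} {s : ℝ} (hs : 0 < s) (θ : ℝ) :
    dRadE f (P s θ) = Arad f s θ := by
  have hnorm : Real.sqrt ((P s θ).1^2 + (P s θ).2^2) = s := by
    have : (P s θ).1^2 + (P s θ).2^2 = s^2 := by
      simp only [P]
      nlinarith [Real.sin_sq_add_cos_sq θ]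
    rw [this, Real.sqrt_sq hs.le]
  unfold dRadE Arad
  rw [hnorm]
  have h1 : (P s θ).1 = s * Real.cos θ := rfl
  have h2 : (P s θ).2 = s * Real.sin θ := rfl
  rw [h1, h2]
  field_simp

/-! ### The radial FTC estimate -/

lemma continuous_Q {f g : ℝ × ℝ → ℝ} (hf : ContDiff ℝ (⊤ : ℕ∞) f) (hg : ContDiff ℝ (⊤ : ℕ∞) g) :
    Continuous (fun q : ℝ × ℝ => Q f g q.1 q.2) := by
  unfold Q
  have h1 := continuous_Arad hf
  have h2 := continuous_Arad hg
  have hfc := hf.continuous.comp continuous_P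
  have hgc := hg.continuous.comp continuous_P
  exact (continuous_fst.mul ((((hfc.pow 2).add (h1.pow 2)).add (hgc.pow 2)).add
    (h2.pow 2))).div_const 2

lemma Q_nonneg (f g : ℝ × ℝ → ℝ) {s : ℝ} (hs : 0 ≤ s) (θ : ℝ) : 0 ≤ Q f g s θ := by
  unfold Q; positivity

lemma radial_bound {f g : ℝ × ℝ → ℝ} (hf : ContDiff ℝ (⊤ : ℕ∞) f) (hg : ContDiff ℝ (⊤ : ℕ∞) g)
    {R : ℝ} (hfR : ∀ θ, f (P R θ) = 0)
    {r : ℝ} (hr : 0 ≤ r) (hrR : r ≤ R) (θ : ℝ) :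
    r * |f (P r θ) * g (P r θ)| ≤ ∫ s in (0:ℝ)..R, Q f g s θ := by
  set D : ℝ → ℝ := fun t => Arad f t θ * g (P t θ) + f (P t θ) * Arad g t θ with hD
  have hDcont : Continuous D := by
    have h1 := (continuous_Arad hf).comp (Continuous.prodMk_left θ)
    have h2 := (continuous_Arad hg).comp (Continuous.prodMk_left θ)
    have h3 := (hf.continuous.comp continuous_P).comp (Continuous.prodMk_left θ)
    have h4 := (hg.continuous.comp continuous_P).comp (Continuous.prodMk_left θ)
    exact (h1.mul h4).add (h3.mul h2)
  have hderiv : ∀ t ∈ Set.uIcc r R, HasDerivAt (fun u => f (P u θ) * g (P u θ)) (D t) t :=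
    fun t _ => (hasDerivAt_P_comp hf t θ).mul (hasDerivAt_P_comp hg t θ)
  have hint : IntervalIntegrable D volume r R := hDcont.intervalIntegrable r R
  have hFTC := intervalIntegral.integral_eq_sub_of_hasDerivAt hderiv hint
  rw [hfR θ] at hFTC
  have hval : f (P r θ) * g (P r θ) = -∫ t in r..R, D t := by
    rw [hFTC]; ring
  have step1 : r * |f (P r θ) * g (P r θ)| ≤ r * ∫ t in r..R, |D t| := by
    apply mul_le_mul_of_nonneg_left _ hr
    rw [hval, abs_neg]
    exact intervalIntegral.abs_integral_le_integral_abs hrR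
  have step2 : r * ∫ t in r..R, |D t| = ∫ t in r..R, r * |D t| := by
    rw [← intervalIntegral.integral_const_mul]
  have step3 : (∫ t in r..R, r * |D t|) ≤ ∫ t in r..R, Q f g t θ := by
    apply intervalIntegral.integral_mono_on hrR
      ((continuous_const.mul hDcont.abs).intervalIntegrable r R)
      (((continuous_Q hf hg).comp (Continuous.prodMk_left θ)).intervalIntegrable r R)
    intro t ht
    have htr : r ≤ t := ht.1
    have ht0 : 0 ≤ t := le_trans hr htr
    have habs : |D t| ≤ ((f (P t θ))^2 + (Arad f t θ)^2 + (g (P t θ))^2 + (Arad g t θ)^2) / 2 := by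
      calc |D t| ≤ |Arad f t θ * g (P t θ)| + |f (P t θ) * Arad g t θ| := abs_add_le _ _
        _ ≤ _ := by
          rw [abs_mul, abs_mul]
          nlinarith [sq_nonneg (|Arad f t θ| - |g (P t θ)|),
            sq_nonneg (|f (P t θ)| - |Arad g t θ|), sq_abs (Arad f t θ), sq_abs (g (P t θ)),
            sq_abs (f (P t θ)), sq_abs (Arad g t θ)]
    calc r * |D t| ≤ t * (((f (P t θ))^2 + (Arad f t θ)^2 + (g (P t θ))^2 + (Arad g t θ)^2) / 2) :=
          mul_le_mul htr habs (abs_nonneg _) ht0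
      _ = Q f g t θ := by unfold Q; ring
  have step4 : (∫ t in r..R, Q f g t θ) ≤ ∫ t in (0:ℝ)..R, Q f g t θ := by
    have hsplit : (∫ t in (0:ℝ)..r, Q f g t θ) + (∫ t in r..R, Q f g t θ)
        = ∫ t in (0:ℝ)..R, Q f g t θ :=
      intervalIntegral.integral_add_adjacent_intervals
        (((continuous_Q hf hg).comp (Continuous.prodMk_left θ)).intervalIntegrable 0 r)
        (((continuous_Q hf hg).comp (Continuous.prodMk_left θ)).intervalIntegrable r R)
    have hpos : 0 ≤ ∫ t in (0:ℝ)..r, Q f g t θ := by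
      apply intervalIntegral.integral_nonneg hr
      intro t ht
      exact Q_nonneg f g ht.1 θ
    linarith
  calc r * |f (P r θ) * g (P r θ)| ≤ r * ∫ t in r..R, |D t| := step1
    _ = _ := step2
    _ ≤ _ := step3
    _ ≤ _ := step4

/-! ### The window (circle Sobolev) estimate -/

lemma window_bound {g g' : ℝ → ℝ} (hg : ∀ θ, HasDerivAt g (g' θ) θ)
    (hg' : Continuous g') (θ₀ : ℝ) :
    g θ₀ ≤ (1/(2*π)) * (∫ θ in (θ₀-π)..(θ₀+π), g θ) + ∫ θ in (θ₀-π)..(θ₀+π), |g' θ| := by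
  have hgd : Differentiable ℝ g := fun θ => (hg θ).differentiableAt
  have hgc : Continuous g := hgd.continuous
  set a := θ₀ - π with ha
  set b := θ₀ + π with hb
  have hab : a ≤ b := by have := Real.pi_pos; simp [ha, hb]; linarith
  obtain ⟨θ₁, hθ₁mem, hθ₁min⟩ :=
    isCompact_Icc.exists_isMinOn (Set.nonempty_Icc.2 hab) hgc.continuousOn
  have hmean : 2 * π * g θ₁ ≤ ∫ θ in a..b, g θ := by
    have : (∫ _ in a..b, g θ₁) ≤ ∫ θ in a..b, g θ := by
      apply intervalIntegral.integral_mono_on hab (intervalIntegrable_const)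
        (hgc.intervalIntegrable a b)
      exact fun x hx => hθ₁min hx
    rw [intervalIntegral.integral_const, smul_eq_mul] at this
    have hba : b - a = 2 * π := by rw [ha, hb]; ring
    rw [hba] at this
    linarith
  have hftc : g θ₀ = g θ₁ + ∫ θ in θ₁..θ₀, g' θ := by
    have := intervalIntegral.integral_eq_sub_of_hasDerivAt
      (fun t _ => hg t) (hg'.intervalIntegrable θ₁ θ₀)
    linarith [this]
  have hmemθ₀ : θ₀ ∈ Set.Icc a b := by
    constructor <;> [rw [ha]; rw [hb]] <;> linarith [Real.pi_pos]
  have habs : |∫ θ in θ₁..θ₀, g' θ| ≤ ∫ θ in a..b, |g' θ| := by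
    rcases le_total θ₁ θ₀ with h | h
    · calc |∫ θ in θ₁..θ₀, g' θ| ≤ ∫ θ in θ₁..θ₀, |g' θ| :=
            intervalIntegral.abs_integral_le_integral_abs h
        _ ≤ ∫ θ in a..b, |g' θ| :=
            intervalIntegral.integral_mono_interval hθ₁mem.1 h hmemθ₀.2
              (Filter.Eventually.of_forall fun x => abs_nonneg _)
              (hg'.abs.intervalIntegrable a b)
    · calc |∫ θ in θ₁..θ₀, g' θ| = |∫ θ in θ₀..θ₁, g' θ| := by
            rw [intervalIntegral.integral_symm]; rw [abs_neg]
        _ ≤ ∫ θ in θ₀..θ₁, |g' θ| := intervalIntegral.abs_integral_le_integral_abs h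
        _ ≤ ∫ θ in a..b, |g' θ| :=
            intervalIntegral.integral_mono_interval hmemθ₀.1 h hθ₁mem.2
              (Filter.Eventually.of_forall fun x => abs_nonneg _)
              (hg'.abs.intervalIntegrable a b)
  have hπ : (0:ℝ) < 2 * π := by positivity
  have h1 : g θ₁ ≤ (1/(2*π)) * ∫ θ in a..b, g θ := by
    rw [mul_comm, ← le_div_iff₀ hπ] at hmean
    rw [div_eq_mul_one_div, mul_comm] at hmean
    exact hmean
  calc g θ₀ = g θ₁ + ∫ θ in θ₁..θ₀, g' θ := hftc
    _ ≤ g θ₁ + |∫ θ in θ₁..θ₀, g' θ| := by linarith [le_abs_self (∫ θ in θ₁..θ₀, g' θ)]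
    _ ≤ (1/(2*π)) * (∫ θ in a..b, g θ) + ∫ θ in a..b, |g' θ| := add_le_add h1 habs

/-! ### The polar change of variables bridge -/

lemma polar_symm_eq_P (q : ℝ × ℝ) : polarCoord.symm q = P q.1 q.2 := by
  simp [polarCoord, P]

lemma integrableOn_polar {F : ℝ × ℝ → ℝ} (hFi : Integrable F) :
    IntegrableOn (fun q : ℝ × ℝ => q.1 * F (P q.1 q.2)) polarCoord.target := by
  set B : ℝ × ℝ → ℝ × ℝ →L[ℝ] ℝ × ℝ := fun p =>
    LinearMap.toContinuousLinearMap (Matrix.toLin (Module.Basis.finTwoProd ℝ) (Module.Basis.finTwoProd ℝ)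
      !![Real.cos p.2, -p.1 * Real.sin p.2; Real.sin p.2, p.1 * Real.cos p.2]) with hB
  have hmeas : MeasurableSet polarCoord.target := polarCoord.open_target.measurableSet
  have hderiv : ∀ q ∈ polarCoord.target,
      HasFDerivWithinAt polarCoord.symm (B q) polarCoord.target q := fun q _ =>
    (hasFDerivAt_polarCoord_symm q).hasFDerivWithinAt
  have hinj : InjOn polarCoord.symm polarCoord.target := polarCoord.symm.injOn
  have himg : polarCoord.symm '' polarCoord.target = polarCoord.source :=
    polarCoord.symm.image_source_eq_target
  have h := (integrableOn_image_iff_integrableOn_abs_det_fderiv_smul volume hmeas hderiv hinj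
    F)
  rw [himg] at h
  have hsrc : IntegrableOn F polarCoord.source := hFi.integrableOn
  rw [h] at hsrc
  have hdet : ∀ q ∈ polarCoord.target, |(B q).det| • F (polarCoord.symm q)
      = q.1 * F (P q.1 q.2) := by
    intro q hq
    have hdet1 : (B q).det = q.1 := by
      conv_rhs => rw [← one_mul q.1, ← Real.cos_sq_add_sin_sq q.2]
      simp only [hB, LinearMap.det_toContinuousLinearMap, LinearMap.det_toLin,
        Matrix.det_fin_two_of, neg_mul]
      ring
    rw [hdet1, abs_of_pos hq.1, smul_eq_mul, polar_symm_eq_P]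
  exact (integrableOn_congr_fun hdet hmeas).mp hsrc

/-- Polar change of variables giving iterated integrals, with support control. -/
lemma bridge {F : ℝ × ℝ → ℝ} (hFi : Integrable F) {R : ℝ} (hR : 0 < R)
    (hvan : ∀ s θ, R ≤ s → F (P s θ) = 0) {M : ℝ}
    (hbd : ∀ x, |F x| ≤ M)
    (hcont : ∀ θ, ContinuousOn (fun s => F (P s θ)) (Ioi 0)) :
    (∫ θ in (-π)..π, ∫ s in (0:ℝ)..R, s * F (P s θ)) = ∫ x, F x := by
  have hIO := integrableOn_polar hFi
  have key : (∫ q in polarCoord.target, q.1 • F (polarCoord.symm q)) = ∫ x, F x :=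
    integral_comp_polarCoord_symm F
  have hcongr : (∫ q in polarCoord.target, q.1 • F (polarCoord.symm q))
      = ∫ q in (Ioi (0:ℝ)) ×ˢ (Ioo (-π) π), q.1 * F (P q.1 q.2) := by
    rw [polarCoord_target]
    apply setIntegral_congr_fun (polarCoord.open_target.measurableSet)
    intro q _
    simp only [smul_eq_mul, polar_symm_eq_P]
  have htarget : polarCoord.target = (Ioi (0:ℝ)) ×ˢ (Ioo (-π) π) := polarCoord_target
  rw [hcongr] at key
  rw [htarget] at hIO
  have hprod : (∫ q in (Ioi (0:ℝ)) ×ˢ (Ioo (-π) π), q.1 * F (P q.1 q.2))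
      = ∫ s in Ioi (0:ℝ), ∫ θ in Ioo (-π) π, s * F (P s θ) := by
    rw [Measure.volume_eq_prod] at hIO ⊢
    exact setIntegral_prod _ hIO
  have hswap : (∫ s in Ioi (0:ℝ), ∫ θ in Ioo (-π) π, s * F (P s θ))
      = ∫ θ in Ioo (-π) π, ∫ s in Ioi (0:ℝ), s * F (P s θ) := by
    apply integral_integral_swap
    rw [Measure.volume_eq_prod] at hIO
    rw [Measure.prod_restrict, ← Measure.volume_eq_prod]
    exact hIO
  have hinner : ∀ θ : ℝ, (∫ s in Ioi (0:ℝ), s * F (P s θ)) = ∫ s in (0:ℝ)..R, s * F (P s θ) := by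
    intro θ
    rw [intervalIntegral.integral_of_le hR.le]
    have hsplit : Ioi (0:ℝ) = Ioc 0 R ∪ Ioi R := (Ioc_union_Ioi_eq_Ioi hR.le).symm
    rw [hsplit, setIntegral_union (Ioc_disjoint_Ioi le_rfl) measurableSet_Ioi]
    · have : (∫ s in Ioi R, s * F (P s θ)) = 0 := by
        rw [setIntegral_congr_fun measurableSet_Ioi
          (fun s hs => by simp only; rw [hvan s θ (le_of_lt hs), mul_zero] :
            EqOn _ (fun _ => (0:ℝ)) _)]
        simp
      rw [this, add_zero]
    · have hmeas : AEMeasurable (fun s => s * F (P s θ)) (volume.restrict (Ioc (0:ℝ) R)) := by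
        have : ContinuousOn (fun s => s * F (P s θ)) (Ioc (0:ℝ) R) :=
          (continuousOn_id.mono (Ioc_subset_Ioi_self)).mul
            ((hcont θ).mono Ioc_subset_Ioi_self)
        exact this.aemeasurable measurableSet_Ioc
      apply Integrable.mono' (g := fun _ => R * M)
        (integrableOn_const measure_Ioc_lt_top.ne)
        hmeas.aestronglyMeasurable
      filter_upwards [ae_restrict_mem measurableSet_Ioc] with s hs
      calc ‖s * F (P s θ)‖ = |s| * |F (P s θ)| := abs_mul _ _
        _ ≤ R * M := by
            apply mul_le_mul _ (hbd _) (abs_nonneg _) hR.le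
            rw [abs_of_pos hs.1]; exact hs.2
    · apply (integrableOn_congr_fun (g := fun _ => (0:ℝ)) _ measurableSet_Ioi).mpr
        (integrableOn_zero)
      intro s hs
      simp only
      rw [hvan s θ (le_of_lt hs), mul_zero]
  calc (∫ θ in (-π)..π, ∫ s in (0:ℝ)..R, s * F (P s θ))
      = ∫ θ in Ioc (-π) π, ∫ s in (0:ℝ)..R, s * F (P s θ) := by
        rw [intervalIntegral.integral_of_le (by linarith [Real.pi_pos] : -π ≤ π)]
    _ = ∫ θ in Ioo (-π) π, ∫ s in (0:ℝ)..R, s * F (P s θ) := integral_Ioc_eq_integral_Ioo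
    _ = ∫ θ in Ioo (-π) π, ∫ s in Ioi (0:ℝ), s * F (P s θ) := by
        apply setIntegral_congr_fun measurableSet_Ioo
        intro θ _
        exact (hinner θ).symm
    _ = ∫ x, F x := by rw [← hswap, ← hprod, key]

/-! ### Pointwise bounds and integrability -/

lemma abs_dRadE_le {f : ℝ × ℝ → ℝ} (x : ℝ × ℝ) :
    |dRadE f x| ≤ |d1 f x| + |d2 f x| := by
  unfold dRadE
  rcases eq_or_lt_of_le (Real.sqrt_nonneg (x.1^2 + x.2^2)) with h | h
  · rw [← h, div_zero, abs_zero]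
    positivity
  · rw [abs_div, abs_of_pos h, div_le_iff₀ h]
    have h1 : |x.1| ≤ Real.sqrt (x.1^2 + x.2^2) := by
      rw [← Real.sqrt_sq_eq_abs]
      exact Real.sqrt_le_sqrt (by nlinarith [sq_nonneg x.2])
    have h2 : |x.2| ≤ Real.sqrt (x.1^2 + x.2^2) := by
      rw [← Real.sqrt_sq_eq_abs]
      exact Real.sqrt_le_sqrt (by nlinarith [sq_nonneg x.1])
    calc |x.1 * d1 f x + x.2 * d2 f x| ≤ |x.1| * |d1 f x| + |x.2| * |d2 f x| := by
          rw [← abs_mul, ← abs_mul]; exact abs_add_le _ _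
      _ ≤ Real.sqrt (x.1^2 + x.2^2) * |d1 f x| + Real.sqrt (x.1^2 + x.2^2) * |d2 f x| := by
          gcongr
      _ = (|d1 f x| + |d2 f x|) * Real.sqrt (x.1^2 + x.2^2) := by ring

lemma abs_dRad_le {f : ℝ × ℝ → ℝ} (x : ℝ × ℝ) :
    |dRad f x| ≤ |d1 f x| + |d2 f x| := by
  unfold dRad
  rcases eq_or_lt_of_le (norm_nonneg x) with h | h
  · rw [← h, div_zero, abs_zero]
    positivity
  · rw [abs_div, abs_of_pos h, div_le_iff₀ h]
    have h1 : |x.1| ≤ ‖x‖ := by rw [← Real.norm_eq_abs]; exact norm_fst_le x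
    have h2 : |x.2| ≤ ‖x‖ := by rw [← Real.norm_eq_abs]; exact norm_snd_le x
    calc |x.1 * d1 f x + x.2 * d2 f x| ≤ |x.1| * |d1 f x| + |x.2| * |d2 f x| := by
          rw [← abs_mul, ← abs_mul]; exact abs_add_le _ _
      _ ≤ ‖x‖ * |d1 f x| + ‖x‖ * |d2 f x| := by gcongr
      _ = (|d1 f x| + |d2 f x|) * ‖x‖ := by ring

lemma sq_dRadE_le_sq_dRad {f : ℝ × ℝ → ℝ} (x : ℝ × ℝ) :
    (dRadE f x)^2 ≤ (dRad f x)^2 := by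
  rcases eq_or_ne x 0 with rfl | hx
  · have h1 : dRadE f 0 = 0 := by
      unfold dRadE; norm_num
    have h2 : dRad f 0 = 0 := by
      unfold dRad; norm_num
    rw [h1, h2]
  · have hn : (0:ℝ) < ‖x‖ := norm_pos_iff.2 hx
    have hle : ‖x‖ ≤ Real.sqrt (x.1^2 + x.2^2) := by
      have h1 : |x.1| ≤ Real.sqrt (x.1^2 + x.2^2) := by
        rw [← Real.sqrt_sq_eq_abs]
        exact Real.sqrt_le_sqrt (by nlinarith [sq_nonneg x.2])
      have h2 : |x.2| ≤ Real.sqrt (x.1^2 + x.2^2) := by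
        rw [← Real.sqrt_sq_eq_abs]
        exact Real.sqrt_le_sqrt (by nlinarith [sq_nonneg x.1])
      calc ‖x‖ = max ‖x.1‖ ‖x.2‖ := Prod.norm_def x
        _ ≤ Real.sqrt (x.1^2 + x.2^2) := by
            apply max_le <;> rw [Real.norm_eq_abs] <;> [exact h1; exact h2]
    unfold dRadE dRad
    rw [div_pow, div_pow]
    apply div_le_div_of_nonneg_left (sq_nonneg _) (by positivity)
    have := Real.sqrt_nonneg (x.1^2 + x.2^2)
    nlinarith

lemma measurable_dRadE {f : ℝ × ℝ → ℝ} (hf : ContDiff ℝ (⊤ : ℕ∞) f) :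
    Measurable (dRadE f) := by
  have h1 : Continuous fun x : ℝ × ℝ => x.1 * d1 f x + x.2 * d2 f x :=
    (continuous_fst.mul (contDiff_d1 hf).continuous).add
      (continuous_snd.mul (contDiff_d2 hf).continuous)
  have h2 : Continuous fun x : ℝ × ℝ => Real.sqrt (x.1^2 + x.2^2) :=
    ((continuous_fst.pow 2).add (continuous_snd.pow 2)).sqrt
  exact h1.measurable.div h2.measurable

lemma measurable_dRad {f : ℝ × ℝ → ℝ} (hf : ContDiff ℝ (⊤ : ℕ∞) f) :
    Measurable (dRad f) := by
  have h1 : Continuous fun x : ℝ × ℝ => x.1 * d1 f x + x.2 * d2 f x :=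
    (continuous_fst.mul (contDiff_d1 hf).continuous).add
      (continuous_snd.mul (contDiff_d2 hf).continuous)
  exact h1.measurable.div continuous_norm.measurable

lemma integrable_sq_dom {f : ℝ × ℝ → ℝ} (hf : ContDiff ℝ (⊤ : ℕ∞) f) (hs : HasCompactSupport f)
    {u : ℝ × ℝ → ℝ} (hmeas : Measurable u)
    (hbd : ∀ x, |u x| ≤ |d1 f x| + |d2 f x|) :
    Integrable (fun x => (u x)^2) := by
  have hGc : Continuous (fun x => (|d1 f x| + |d2 f x|)^2) :=
    (((contDiff_d1 hf).continuous.abs.add (contDiff_d2 hf).continuous.abs).pow 2)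
  have hGs : HasCompactSupport (fun x => (|d1 f x| + |d2 f x|)^2) := by
    have hd1 : HasCompactSupport (d1 f) := hasCompactSupport_d1 hs
    have hd2 : HasCompactSupport (d2 f) := hasCompactSupport_d2 hs
    have := (hd1.abs.add hd2.abs)
    exact this.comp_left (g := fun t : ℝ => t^2) (by norm_num)
  have hGi : Integrable (fun x => (|d1 f x| + |d2 f x|)^2) :=
    hGc.integrable_of_hasCompactSupport hGs
  apply Integrable.mono' hGi ((hmeas.pow_const 2).aestronglyMeasurable)
  filter_upwards with x
  have h := hbd x
  have h0 : (0:ℝ) ≤ |d1 f x| + |d2 f x| := by positivity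
  rw [Real.norm_eq_abs, abs_of_nonneg (sq_nonneg _)]
  calc (u x)^2 = |u x|^2 := (sq_abs _).symm
    _ ≤ (|d1 f x| + |d2 f x|)^2 := by nlinarith [abs_nonneg (u x)]

lemma integrable_sq_cont {w : ℝ × ℝ → ℝ} (hw : Continuous w) (hs : HasCompactSupport w) :
    Integrable (fun x => (w x)^2) :=
  (hw.pow 2).integrable_of_hasCompactSupport
    (hs.comp_left (g := fun t : ℝ => t^2) (by norm_num) : HasCompactSupport ((fun t : ℝ => t^2) ∘ w))

/-! ### Small helper lemmas -/

lemma sqrt_add_le {a b : ℝ} (ha : 0 ≤ a) (hb : 0 ≤ b) :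
    Real.sqrt (a + b) ≤ Real.sqrt a + Real.sqrt b := by
  have hs := Real.sqrt_nonneg a
  have ht := Real.sqrt_nonneg b
  have h1 : a + b ≤ (Real.sqrt a + Real.sqrt b)^2 := by
    nlinarith [Real.sq_sqrt ha, Real.sq_sqrt hb, mul_nonneg hs ht]
  calc Real.sqrt (a+b) ≤ Real.sqrt ((Real.sqrt a + Real.sqrt b)^2) := Real.sqrt_le_sqrt h1
    _ = Real.sqrt a + Real.sqrt b := Real.sqrt_sq (by positivity)

lemma sq_le_sq_of_abs_le {a b : ℝ} (h : |a| ≤ b) : a^2 ≤ b^2 := by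
  nlinarith [abs_nonneg a, sq_abs a]

lemma half_le_normP {s : ℝ} (hs : 0 ≤ s) (θ : ℝ) : s / 2 ≤ ‖P s θ‖ := by
  have h1 : 1 ≤ |Real.cos θ| + |Real.sin θ| := by
    nlinarith [Real.sin_sq_add_cos_sq θ, Real.abs_cos_le_one θ, Real.abs_sin_le_one θ,
      sq_abs (Real.cos θ), sq_abs (Real.sin θ), abs_nonneg (Real.cos θ),
      abs_nonneg (Real.sin θ)]
  have h2 : s * |Real.cos θ| ≤ ‖P s θ‖ := by
    rw [Prod.norm_def]
    calc s * |Real.cos θ| = |s * Real.cos θ| := by rw [abs_mul, abs_of_nonneg hs]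
      _ = ‖(P s θ).1‖ := by rw [Real.norm_eq_abs]; rfl
      _ ≤ _ := le_max_left _ _
  have h3 : s * |Real.sin θ| ≤ ‖P s θ‖ := by
    rw [Prod.norm_def]
    calc s * |Real.sin θ| = |s * Real.sin θ| := by rw [abs_mul, abs_of_nonneg hs]
      _ = ‖(P s θ).2‖ := by rw [Real.norm_eq_abs]; rfl
      _ ≤ _ := le_max_right _ _
  have h4 : s * 1 ≤ s * (|Real.cos θ| + |Real.sin θ|) := mul_le_mul_of_nonneg_left h1 hs
  nlinarith

lemma norm_le_sqrt_sq_add_sq (x : ℝ × ℝ) : ‖x‖ ≤ Real.sqrt (x.1^2 + x.2^2) := by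
  have h1 : |x.1| ≤ Real.sqrt (x.1^2 + x.2^2) := by
    rw [← Real.sqrt_sq_eq_abs]
    exact Real.sqrt_le_sqrt (by nlinarith [sq_nonneg x.2])
  have h2 : |x.2| ≤ Real.sqrt (x.1^2 + x.2^2) := by
    rw [← Real.sqrt_sq_eq_abs]
    exact Real.sqrt_le_sqrt (by nlinarith [sq_nonneg x.1])
  calc ‖x‖ = max ‖x.1‖ ‖x.2‖ := Prod.norm_def x
    _ ≤ Real.sqrt (x.1^2 + x.2^2) := by
        apply max_le <;> rw [Real.norm_eq_abs] <;> [exact h1; exact h2]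

/-! ### The core pointwise estimate -/

lemma core_bound (v : ℝ × ℝ → ℝ) (hv : ContDiff ℝ (⊤ : ℕ∞) v) (hsupp : HasCompactSupport v)
    (x : ℝ × ℝ) :
    Real.sqrt (x.1^2 + x.2^2) * (v x)^2 ≤
      2 * ((∫ y : ℝ × ℝ, (v y)^2) + (∫ y : ℝ × ℝ, (dRadE v y)^2) +
        (∫ y : ℝ × ℝ, (dAng v y)^2) + (∫ y : ℝ × ℝ, (dRadE (dAng v) y)^2)) := by
  have hva : ContDiff ℝ (⊤ : ℕ∞) (dAng v) := contDiff_dAng hv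
  have hvc : Continuous v := hv.continuous
  have hBc : Continuous (dAng v) := hva.continuous
  have hsuppB : HasCompactSupport (dAng v) := hasCompactSupport_dAng hsupp
  set I1 := ∫ y : ℝ × ℝ, (v y)^2 with hI1def
  set I2 := ∫ y : ℝ × ℝ, (dRadE v y)^2 with hI2def
  set I3 := ∫ y : ℝ × ℝ, (dAng v y)^2 with hI3def
  set I4 := ∫ y : ℝ × ℝ, (dRadE (dAng v) y)^2 with hI4def
  have hI1n : 0 ≤ I1 := integral_nonneg fun y => sq_nonneg _
  have hI2n : 0 ≤ I2 := integral_nonneg fun y => sq_nonneg _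
  have hI3n : 0 ≤ I3 := integral_nonneg fun y => sq_nonneg _
  have hI4n : 0 ≤ I4 := integral_nonneg fun y => sq_nonneg _
  set r := Real.sqrt (x.1^2 + x.2^2) with hrdef
  rcases eq_or_lt_of_le (Real.sqrt_nonneg (x.1^2 + x.2^2)) with hr0 | hr0
  · have hrz : r = 0 := by rw [hrdef, ← hr0]
    rw [hrz]
    nlinarith [sq_nonneg (v x)]
  -- now 0 < r
  have hrne : r ≠ 0 := ne_of_gt hr0
  -- find the angle
  set z : ℂ := (x.1 : ℂ) + (x.2 : ℂ) * Complex.I with hzdef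
  have hzabs : ‖z‖ = r := by
    rw [Complex.norm_def, hzdef, Complex.normSq_add_mul_I]
  have hzne : z ≠ 0 := by
    intro h
    rw [h] at hzabs
    simp at hzabs
    exact hrne hzabs.symm
  set θ₀ := z.arg with hθ₀def
  have hzre : z.re = x.1 := by simp [hzdef]
  have hzim : z.im = x.2 := by simp [hzdef]
  have hcos : Real.cos θ₀ = x.1 / r := by
    rw [hθ₀def, Complex.cos_arg hzne, hzre, hzabs]
  have hsin : Real.sin θ₀ = x.2 / r := by
    rw [hθ₀def, Complex.sin_arg, hzim, hzabs]
  have hPx : P r θ₀ = x := by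
    unfold P
    rw [hcos, hsin]
    ext <;> simp <;> field_simp
  -- the support radius
  obtain ⟨M0, hM0⟩ := hsupp.isBounded.subset_closedBall 0
  set M := max M0 0 with hMdef
  have hM : tsupport v ⊆ Metric.closedBall 0 M :=
    subset_trans hM0 (Metric.closedBall_subset_closedBall (le_max_left _ _))
  have hMn : 0 ≤ M := le_max_right _ _
  set R := 2 * M + r + 1 with hRdef
  have hR0 : 0 < R := by positivity
  have hrR : r ≤ R := by rw [hRdef]; linarith
  have hvanP : ∀ s θ, R ≤ s → P s θ ∉ tsupport v := by
    intro s θ hRs hmem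
    have h1 : ‖P s θ‖ ≤ M := by
      have := hM hmem
      rwa [Metric.mem_closedBall, dist_zero_right] at this
    have h2 : s / 2 ≤ ‖P s θ‖ := half_le_normP (by linarith) θ
    linarith
  have hvanPB : ∀ s θ, R ≤ s → P s θ ∉ tsupport (dAng v) :=
    fun s θ h hmem => hvanP s θ h (tsupport_dAng_subset hmem)
  have hvR : ∀ θ, v (P R θ) = 0 :=
    fun θ => image_eq_zero_of_notMem_tsupport (hvanP R θ le_rfl)
  -- the window function and its derivative
  set g : ℝ → ℝ := fun θ => r * (v (P r θ) * v (P r θ)) with hgdef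
  set g' : ℝ → ℝ := fun θ =>
    r * (dAng v (P r θ) * v (P r θ) + v (P r θ) * dAng v (P r θ)) with hg'def
  have hPcont : ∀ s : ℝ, Continuous (fun θ => P s θ) := by
    intro s
    exact continuous_P.comp (Continuous.prodMk_right s)
  have hgc : Continuous g :=
    continuous_const.mul ((hvc.comp (hPcont r)).mul (hvc.comp (hPcont r)))
  have hg'c : Continuous g' :=
    continuous_const.mul (((hBc.comp (hPcont r)).mul (hvc.comp (hPcont r))).add
      ((hvc.comp (hPcont r)).mul (hBc.comp (hPcont r))))
  have hg : ∀ θ, HasDerivAt g (g' θ) θ := by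
    intro θ
    exact ((hasDerivAt_P_comp_theta hv r θ).mul (hasDerivAt_P_comp_theta hv r θ)).const_mul r
  -- the majorant functions
  set Φ : ℝ → ℝ := fun θ => ∫ s in (0:ℝ)..R, Q v v s θ with hΦdef
  set Ψ : ℝ → ℝ := fun θ => ∫ s in (0:ℝ)..R, Q v (dAng v) s θ with hΨdef
  have hΦc : Continuous Φ := by
    apply intervalIntegral.continuous_parametric_intervalIntegral_of_continuous'
      (f := fun θ t => Q v v t θ)
    exact (continuous_Q hv hv).comp continuous_swap
  have hΨc : Continuous Ψ := by
    apply intervalIntegral.continuous_parametric_intervalIntegral_of_continuous'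
      (f := fun θ t => Q v (dAng v) t θ)
    exact (continuous_Q hv hva).comp continuous_swap
  have hgleΦ : ∀ θ, g θ ≤ Φ θ := by
    intro θ
    have h := radial_bound hv hv hvR hr0.le hrR θ
    calc g θ = r * |v (P r θ) * v (P r θ)| := by
          rw [hgdef]; simp only; rw [abs_of_nonneg (mul_self_nonneg _)]
      _ ≤ Φ θ := h
  have hg'leΨ : ∀ θ, |g' θ| ≤ 2 * Ψ θ := by
    intro θ
    have h := radial_bound hv hva hvR hr0.le hrR θ
    have heq : |g' θ| = 2 * (r * |v (P r θ) * dAng v (P r θ)|) := by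
      rw [hg'def]
      simp only
      rw [show r * (dAng v (P r θ) * v (P r θ) + v (P r θ) * dAng v (P r θ))
          = 2 * (r * (v (P r θ) * dAng v (P r θ))) from by ring]
      rw [abs_mul, abs_mul, abs_of_nonneg (by norm_num : (0:ℝ) ≤ 2), abs_of_pos hr0]
    rw [heq]
    linarith
  -- the window estimate
  have hab : θ₀ - π ≤ θ₀ + π := by linarith [Real.pi_pos]
  have hwin := window_bound hg hg'c θ₀
  have hint1 : (∫ θ in (θ₀-π)..(θ₀+π), g θ) ≤ ∫ θ in (θ₀-π)..(θ₀+π), Φ θ :=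
    intervalIntegral.integral_mono_on hab (hgc.intervalIntegrable _ _)
      (hΦc.intervalIntegrable _ _) (fun θ _ => hgleΦ θ)
  have hint2 : (∫ θ in (θ₀-π)..(θ₀+π), |g' θ|) ≤ ∫ θ in (θ₀-π)..(θ₀+π), 2 * Ψ θ :=
    intervalIntegral.integral_mono_on hab (hg'c.abs.intervalIntegrable _ _)
      ((continuous_const.mul hΨc).intervalIntegrable _ _) (fun θ _ => hg'leΨ θ)
  -- periodicity
  have hΦper : Function.Periodic Φ (2*π) := by
    intro θ
    rw [hΦdef]
    simp only [Q, Arad, P, Real.cos_add_two_pi, Real.sin_add_two_pi]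
  have hΨper : Function.Periodic Ψ (2*π) := by
    intro θ
    rw [hΨdef]
    simp only [Q, Arad, P, Real.cos_add_two_pi, Real.sin_add_two_pi]
  have hshiftΦ : (∫ θ in (θ₀-π)..(θ₀+π), Φ θ) = ∫ θ in (-π)..π, Φ θ := by
    have h1 := hΦper.intervalIntegral_add_eq (θ₀ - π) (-π)
    rw [show θ₀ - π + 2*π = θ₀ + π from by ring, show -π + 2*π = π from by ring] at h1
    exact h1
  have hshiftΨ : (∫ θ in (θ₀-π)..(θ₀+π), Ψ θ) = ∫ θ in (-π)..π, Ψ θ := by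
    have h1 := hΨper.intervalIntegral_add_eq (θ₀ - π) (-π)
    rw [show θ₀ - π + 2*π = θ₀ + π from by ring, show -π + 2*π = π from by ring] at h1
    exact h1
  -- the four plane integrands
  set F12 : ℝ × ℝ → ℝ := fun y => (v y)^2 + (dRadE v y)^2 with hF12def
  set Fall : ℝ × ℝ → ℝ :=
    fun y => (v y)^2 + (dRadE v y)^2 + (dAng v y)^2 + (dRadE (dAng v) y)^2 with hFalldef
  have hI1i : Integrable (fun y : ℝ × ℝ => (v y)^2) := integrable_sq_cont hvc hsupp
  have hI2i : Integrable (fun y : ℝ × ℝ => (dRadE v y)^2) :=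
    integrable_sq_dom hv hsupp (measurable_dRadE hv) abs_dRadE_le
  have hI3i : Integrable (fun y : ℝ × ℝ => (dAng v y)^2) := integrable_sq_cont hBc hsuppB
  have hI4i : Integrable (fun y : ℝ × ℝ => (dRadE (dAng v) y)^2) :=
    integrable_sq_dom hva hsuppB (measurable_dRadE hva) abs_dRadE_le
  have hF12i : Integrable F12 := hI1i.add hI2i
  have hFalli : Integrable Fall := ((hI1i.add hI2i).add hI3i).add hI4i
  -- uniform bounds
  obtain ⟨C1, hC1⟩ := hsupp.exists_bound_of_continuous hvc
  obtain ⟨C2, hC2⟩ :=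
    (hasCompactSupport_d1 hsupp).exists_bound_of_continuous (contDiff_d1 hv).continuous
  obtain ⟨C3, hC3⟩ :=
    (hasCompactSupport_d2 hsupp).exists_bound_of_continuous (contDiff_d2 hv).continuous
  obtain ⟨C4, hC4⟩ := hsuppB.exists_bound_of_continuous hBc
  obtain ⟨C5, hC5⟩ :=
    (hasCompactSupport_d1 hsuppB).exists_bound_of_continuous (contDiff_d1 hva).continuous
  obtain ⟨C6, hC6⟩ :=
    (hasCompactSupport_d2 hsuppB).exists_bound_of_continuous (contDiff_d2 hva).continuous
  have hsq1 : ∀ y, (v y)^2 ≤ C1^2 := fun y =>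
    sq_le_sq_of_abs_le (by rw [← Real.norm_eq_abs]; exact hC1 y)
  have hsq2 : ∀ y, (dRadE v y)^2 ≤ (C2 + C3)^2 := fun y =>
    sq_le_sq_of_abs_le (le_trans (abs_dRadE_le y)
      (add_le_add (by rw [← Real.norm_eq_abs]; exact hC2 y)
        (by rw [← Real.norm_eq_abs]; exact hC3 y)))
  have hsq3 : ∀ y, (dAng v y)^2 ≤ C4^2 := fun y =>
    sq_le_sq_of_abs_le (by rw [← Real.norm_eq_abs]; exact hC4 y)
  have hsq4 : ∀ y, (dRadE (dAng v) y)^2 ≤ (C5 + C6)^2 := fun y =>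
    sq_le_sq_of_abs_le (le_trans (abs_dRadE_le y)
      (add_le_add (by rw [← Real.norm_eq_abs]; exact hC5 y)
        (by rw [← Real.norm_eq_abs]; exact hC6 y)))
  have hbd12 : ∀ y, |F12 y| ≤ C1^2 + (C2+C3)^2 := by
    intro y
    rw [hF12def]
    simp only
    rw [abs_of_nonneg (by positivity)]
    exact add_le_add (hsq1 y) (hsq2 y)
  have hbdall : ∀ y, |Fall y| ≤ C1^2 + (C2+C3)^2 + C4^2 + (C5+C6)^2 := by
    intro y
    rw [hFalldef]
    simp only
    rw [abs_of_nonneg (by positivity)]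
    exact add_le_add (add_le_add (add_le_add (hsq1 y) (hsq2 y)) (hsq3 y)) (hsq4 y)
  -- vanishing beyond R
  have hvan12 : ∀ s θ, R ≤ s → F12 (P s θ) = 0 := by
    intro s θ h
    rw [hF12def]
    simp only
    rw [image_eq_zero_of_notMem_tsupport (hvanP s θ h), dRadE_eq_zero (hvanP s θ h)]
    norm_num
  have hvanall : ∀ s θ, R ≤ s → Fall (P s θ) = 0 := by
    intro s θ h
    rw [hFalldef]
    simp only
    rw [image_eq_zero_of_notMem_tsupport (hvanP s θ h), dRadE_eq_zero (hvanP s θ h),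
      dAng_eq_zero (hvanP s θ h), dRadE_eq_zero (hvanPB s θ h)]
    norm_num
  -- continuity along rays
  have hray : ∀ θ : ℝ, Continuous (fun s => P s θ) :=
    fun θ => continuous_P.comp (Continuous.prodMk_left θ)
  have hcont12 : ∀ θ, ContinuousOn (fun s => F12 (P s θ)) (Ioi 0) := by
    intro θ
    rw [hF12def]
    simp only
    apply ContinuousOn.add
    · exact ((hvc.comp (hray θ)).pow 2).continuousOn
    · apply ContinuousOn.congr (f := fun s => (Arad v s θ)^2)
      · exact (((continuous_Arad hv).comp (Continuous.prodMk_left θ)).pow 2).continuousOn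
      · intro s hs
        simp only
        rw [dRadE_P hs]
  have hcontall : ∀ θ, ContinuousOn (fun s => Fall (P s θ)) (Ioi 0) := by
    intro θ
    rw [hFalldef]
    simp only
    apply ContinuousOn.add
    apply ContinuousOn.add
    apply ContinuousOn.add
    · exact ((hvc.comp (hray θ)).pow 2).continuousOn
    · apply ContinuousOn.congr (f := fun s => (Arad v s θ)^2)
      · exact (((continuous_Arad hv).comp (Continuous.prodMk_left θ)).pow 2).continuousOn
      · intro s hs
        simp only
        rw [dRadE_P hs]
    · exact ((hBc.comp (hray θ)).pow 2).continuousOn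
    · apply ContinuousOn.congr (f := fun s => (Arad (dAng v) s θ)^2)
      · exact (((continuous_Arad hva).comp (Continuous.prodMk_left θ)).pow 2).continuousOn
      · intro s hs
        simp only
        rw [dRadE_P hs]
  -- bridge applications
  have hbr12 := bridge hF12i hR0 hvan12 hbd12 hcont12
  have hbrall := bridge hFalli hR0 hvanall hbdall hcontall
  have hsplit12 : (∫ y : ℝ × ℝ, F12 y) = I1 + I2 := by
    rw [hF12def, hI1def, hI2def]
    exact integral_add hI1i hI2i
  have hsplitall : (∫ y : ℝ × ℝ, Fall y) = I1 + I2 + I3 + I4 := by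
    rw [hFalldef, hI1def, hI2def, hI3def, hI4def]
    have h12 : Integrable (fun y : ℝ × ℝ => (v y)^2 + (dRadE v y)^2) := hI1i.add hI2i
    have h123 : Integrable (fun y : ℝ × ℝ => (v y)^2 + (dRadE v y)^2 + (dAng v y)^2) :=
      h12.add hI3i
    calc (∫ y : ℝ × ℝ, ((v y)^2 + (dRadE v y)^2 + (dAng v y)^2 + (dRadE (dAng v) y)^2))
        = (∫ y : ℝ × ℝ, ((v y)^2 + (dRadE v y)^2 + (dAng v y)^2))
          + ∫ y : ℝ × ℝ, (dRadE (dAng v) y)^2 := integral_add h123 hI4i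
      _ = (∫ y : ℝ × ℝ, ((v y)^2 + (dRadE v y)^2)) + (∫ y : ℝ × ℝ, (dAng v y)^2)
          + ∫ y : ℝ × ℝ, (dRadE (dAng v) y)^2 := by rw [integral_add h12 hI3i]
      _ = _ := by rw [integral_add hI1i hI2i]
  have hΦeq : (∫ θ in (-π)..π, Φ θ) = I1 + I2 := by
    rw [← hsplit12, ← hbr12]
    apply intervalIntegral.integral_congr
    intro θ _
    rw [hΦdef]
    simp only
    apply intervalIntegral.integral_congr
    intro s hs
    rw [Set.uIcc_of_le hR0.le] at hs
    rcases eq_or_lt_of_le hs.1 with h0 | h0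
    · rw [← h0]
      simp [Q]
    · simp only [Q, hF12def]
      rw [dRadE_P h0]
      ring
  have hΨeq : (∫ θ in (-π)..π, Ψ θ) = (1/2) * (I1 + I2 + I3 + I4) := by
    rw [← hsplitall, ← hbrall, ← intervalIntegral.integral_const_mul]
    apply intervalIntegral.integral_congr
    intro θ _
    rw [hΨdef]
    simp only
    rw [← intervalIntegral.integral_const_mul]
    apply intervalIntegral.integral_congr
    intro s hs
    rw [Set.uIcc_of_le hR0.le] at hs
    rcases eq_or_lt_of_le hs.1 with h0 | h0
    · rw [← h0]
      simp [Q]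
    · simp only [Q, hFalldef]
      rw [dRadE_P h0, dRadE_P h0]
      ring
  -- combine everything
  have hgval : g θ₀ = r * (v x)^2 := by
    rw [hgdef]
    simp only
    rw [hPx]
    ring
  have h2pi : 1/(2*π) ≤ 1 := by
    rw [div_le_one (by positivity)]
    linarith [Real.pi_gt_three]
  have e1 : (∫ θ in (θ₀-π)..(θ₀+π), 2 * Ψ θ) = 2 * ∫ θ in (θ₀-π)..(θ₀+π), Ψ θ :=
    intervalIntegral.integral_const_mul _ _
  have c1 : g θ₀ ≤ (1/(2*π)) * (I1 + I2) + 2 * ((1/2) * (I1+I2+I3+I4)) := by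
    calc g θ₀ ≤ (1/(2*π)) * (∫ θ in (θ₀-π)..(θ₀+π), g θ)
        + ∫ θ in (θ₀-π)..(θ₀+π), |g' θ| := hwin
      _ ≤ (1/(2*π)) * (∫ θ in (θ₀-π)..(θ₀+π), Φ θ)
        + ∫ θ in (θ₀-π)..(θ₀+π), 2 * Ψ θ :=
          add_le_add (mul_le_mul_of_nonneg_left hint1 (by positivity)) hint2
      _ = (1/(2*π)) * (∫ θ in (-π)..π, Φ θ) + 2 * ∫ θ in (-π)..π, Ψ θ := by
          rw [e1, hshiftΦ, hshiftΨ]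
      _ = (1/(2*π)) * (I1 + I2) + 2 * ((1/2) * (I1+I2+I3+I4)) := by
          rw [hΦeq, hΨeq]
  have c2 : (1/(2*π)) * (I1+I2) ≤ 1 * (I1+I2) :=
    mul_le_mul_of_nonneg_right h2pi (by linarith)
  rw [← hgval]
  linarith


end

/-- 2D Klainerman–Sobolev type decay:
`sup_x |x|^{1/2}|v(x)| ≲ ‖v‖₂ + ‖∂_r v‖₂ + ‖∂_θ v‖₂ + ‖∂_r ∂_θ v‖₂`
for smooth compactly supported `v`. -/
theorem sobolev_decay_2d :
    ∃ C : ℝ, 0 < C ∧ ∀ v : ℝ × ℝ → ℝ,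
      ContDiff ℝ (⊤ : ℕ∞) v → HasCompactSupport v →
      ∀ x : ℝ × ℝ,
        Real.sqrt ‖x‖ * |v x| ≤
          C * (L2norm v + L2norm (dRad v) + L2norm (dAng v) +
            L2norm (dRad (dAng v))) := by
  refine ⟨2, by norm_num, ?_⟩
  intro v hv hsupp x
  have hva : ContDiff ℝ (⊤ : ℕ∞) (dAng v) := contDiff_dAng hv
  have hsuppB : HasCompactSupport (dAng v) := hasCompactSupport_dAng hsupp
  set I1 := ∫ y : ℝ × ℝ, (v y)^2 with hI1def
  set I2 := ∫ y : ℝ × ℝ, (dRadE v y)^2 with hI2def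
  set I3 := ∫ y : ℝ × ℝ, (dAng v y)^2 with hI3def
  set I4 := ∫ y : ℝ × ℝ, (dRadE (dAng v) y)^2 with hI4def
  have hI1n : 0 ≤ I1 := integral_nonneg fun y => sq_nonneg _
  have hI2n : 0 ≤ I2 := integral_nonneg fun y => sq_nonneg _
  have hI3n : 0 ≤ I3 := integral_nonneg fun y => sq_nonneg _
  have hI4n : 0 ≤ I4 := integral_nonneg fun y => sq_nonneg _
  have hcore := core_bound v hv hsupp x
  set r := Real.sqrt (x.1^2 + x.2^2) with hrdef
  have hrn : 0 ≤ r := Real.sqrt_nonneg _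
  -- step 1 : the norm weight
  have step1 : Real.sqrt ‖x‖ * |v x| ≤ Real.sqrt r * |v x| :=
    mul_le_mul_of_nonneg_right (Real.sqrt_le_sqrt (norm_le_sqrt_sq_add_sq x)) (abs_nonneg _)
  -- step 2 : express as sqrt of the core quantity
  have step2 : Real.sqrt r * |v x| = Real.sqrt (r * (v x)^2) := by
    rw [Real.sqrt_mul hrn, Real.sqrt_sq_eq_abs]
  -- step 3 : apply the core bound
  have step3 : Real.sqrt (r * (v x)^2) ≤ Real.sqrt (2 * (I1 + I2 + I3 + I4)) :=
    Real.sqrt_le_sqrt hcore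
  -- step 4 : split the square root
  have step4 : Real.sqrt (2 * (I1 + I2 + I3 + I4))
      ≤ Real.sqrt 2 * (Real.sqrt I1 + Real.sqrt I2 + Real.sqrt I3 + Real.sqrt I4) := by
    rw [Real.sqrt_mul (by norm_num : (0:ℝ) ≤ 2)]
    apply mul_le_mul_of_nonneg_left _ (Real.sqrt_nonneg 2)
    calc Real.sqrt (I1 + I2 + I3 + I4)
        ≤ Real.sqrt (I1 + I2 + I3) + Real.sqrt I4 := sqrt_add_le (by linarith) hI4n
      _ ≤ Real.sqrt (I1 + I2) + Real.sqrt I3 + Real.sqrt I4 := by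
          linarith [sqrt_add_le (show (0:ℝ) ≤ I1 + I2 by linarith) hI3n]
      _ ≤ Real.sqrt I1 + Real.sqrt I2 + Real.sqrt I3 + Real.sqrt I4 := by
          linarith [sqrt_add_le hI1n hI2n]
  -- step 5 : compare each sqrt with an L² norm
  have hL1 : Real.sqrt I1 = L2norm v := rfl
  have hL3 : Real.sqrt I3 = L2norm (dAng v) := rfl
  have hL2 : Real.sqrt I2 ≤ L2norm (dRad v) := by
    apply Real.sqrt_le_sqrt
    apply integral_mono_of_nonneg (Filter.Eventually.of_forall fun y => sq_nonneg _)
      (integrable_sq_dom hv hsupp (measurable_dRad hv) abs_dRad_le)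
    exact Filter.Eventually.of_forall fun y => sq_dRadE_le_sq_dRad y
  have hL4 : Real.sqrt I4 ≤ L2norm (dRad (dAng v)) := by
    apply Real.sqrt_le_sqrt
    apply integral_mono_of_nonneg (Filter.Eventually.of_forall fun y => sq_nonneg _)
      (integrable_sq_dom hva hsuppB (measurable_dRad hva) abs_dRad_le)
    exact Filter.Eventually.of_forall fun y => sq_dRadE_le_sq_dRad y
  have hLn1 : 0 ≤ L2norm v := Real.sqrt_nonneg _
  have hLn2 : 0 ≤ L2norm (dRad v) := Real.sqrt_nonneg _
  have hLn3 : 0 ≤ L2norm (dAng v) := Real.sqrt_nonneg _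
  have hLn4 : 0 ≤ L2norm (dRad (dAng v)) := Real.sqrt_nonneg _
  have hsqrt2 : Real.sqrt 2 ≤ 2 := by
    nlinarith [Real.sq_sqrt (by norm_num : (0:ℝ) ≤ 2), Real.sqrt_nonneg 2]
  have step5 : Real.sqrt 2 * (Real.sqrt I1 + Real.sqrt I2 + Real.sqrt I3 + Real.sqrt I4)
      ≤ 2 * (L2norm v + L2norm (dRad v) + L2norm (dAng v) + L2norm (dRad (dAng v))) := by
    have h1 : Real.sqrt I1 + Real.sqrt I2 + Real.sqrt I3 + Real.sqrt I4
        ≤ L2norm v + L2norm (dRad v) + L2norm (dAng v) + L2norm (dRad (dAng v)) := by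
      rw [hL1, hL3]
      linarith
    calc Real.sqrt 2 * (Real.sqrt I1 + Real.sqrt I2 + Real.sqrt I3 + Real.sqrt I4)
        ≤ Real.sqrt 2 * (L2norm v + L2norm (dRad v) + L2norm (dAng v) +
            L2norm (dRad (dAng v))) :=
          mul_le_mul_of_nonneg_left h1 (Real.sqrt_nonneg 2)
      _ ≤ 2 * (L2norm v + L2norm (dRad v) + L2norm (dAng v) + L2norm (dRad (dAng v))) := by
          apply mul_le_mul_of_nonneg_right hsqrt2
          linarith [hLn1, hLn2, hLn3, hLn4]
  calc Real.sqrt ‖x‖ * |v x| ≤ Real.sqrt r * |v x| := step1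
    _ = Real.sqrt (r * (v x)^2) := step2
    _ ≤ Real.sqrt (2 * (I1 + I2 + I3 + I4)) := step3
    _ ≤ Real.sqrt 2 * (Real.sqrt I1 + Real.sqrt I2 + Real.sqrt I3 + Real.sqrt I4) := step4
    _ ≤ _ := step5
end

section
/- For any real-valued h ∈ C_c^∞([0, M+1)) with M > 0, the weighted Hardy-type inequality ∫₀^{M+1} h(ρ)²/(2+M-ρ)² · ρ dρ ≤ 4 ∫₀^∞ h'(ρ)² ρ dρ holds. -/
open MeasureTheory

/-- Refined Hardy inequality: for smooth `h` compactly supported in `[0, M+1)`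
with `M > 0`,
`∫₀^{M+1} h(ρ)²/(2+M-ρ)² · ρ dρ ≤ 4 ∫₀^∞ h'(ρ)² ρ dρ`. -/
theorem refined_hardy_inequality (M : ℝ) (hM : 0 < M) (h : ℝ → ℝ)
    (hsm : ContDiff ℝ (⊤ : ℕ∞) h)
    (hvan : ∃ c : ℝ, c < M + 1 ∧ ∀ ρ : ℝ, c ≤ ρ → h ρ = 0) :
    (∫ ρ in (0:ℝ)..(M+1), (h ρ)^2 / (2 + M - ρ)^2 * ρ) ≤
      4 * ∫ ρ in Set.Ioi (0:ℝ), (deriv h ρ)^2 * ρ := by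
  obtain ⟨c₀, hc₀M, hvan₀⟩ := hvan
  have hcont : Continuous h := hsm.continuous
  have hdiff : Differentiable ℝ h := hsm.differentiable (by simp)
  have hcont' : Continuous (deriv h) := hsm.continuous_deriv (by simp)
  have hM1 : (0:ℝ) ≤ M + 1 := by linarith
  have huIcc : Set.uIcc (0:ℝ) (M+1) = Set.Icc 0 (M+1) := Set.uIcc_of_le hM1
  have hsne : ∀ x ∈ Set.uIcc (0:ℝ) (M+1), 2 + M - x ≠ 0 := by
    intro x hx
    rw [huIcc] at hx
    nlinarith [hx.1, hx.2]
  have hderiv0 : ∀ ρ, c₀ < ρ → deriv h ρ = 0 := by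
    intro ρ hρ
    have he : h =ᶠ[nhds ρ] fun _ => (0:ℝ) := by
      filter_upwards [Ioi_mem_nhds hρ] with x hx
      exact hvan₀ x hx.le
    rw [he.deriv_eq, deriv_const]
  set X : ℝ → ℝ := fun ρ => (h ρ)^2 / (2 + M - ρ)^2 * ρ with hX
  set Y : ℝ → ℝ := fun ρ => (2 * h ρ * deriv h ρ * ρ + (h ρ)^2) / (2 + M - ρ) with hY
  set Z : ℝ → ℝ := fun ρ => (deriv h ρ)^2 * ρ with hZ
  -- continuity on the interval
  have hXC : ContinuousOn X (Set.uIcc (0:ℝ) (M+1)) := by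
    apply ContinuousOn.mul _ continuousOn_id
    exact ((hcont.pow 2).continuousOn).div
      (((continuous_const.sub continuous_id).pow 2).continuousOn)
      (fun x hx => pow_ne_zero _ (hsne x hx))
  have hYC : ContinuousOn Y (Set.uIcc (0:ℝ) (M+1)) := by
    apply ContinuousOn.div _ ((continuous_const.sub continuous_id).continuousOn) hsne
    exact (((continuous_const.mul hcont).mul hcont').mul continuous_id).continuousOn.add
      ((hcont.pow 2).continuousOn)
  have hZC : Continuous Z := (hcont'.pow 2).mul continuous_id
  have hXint : IntervalIntegrable X volume 0 (M+1) := hXC.intervalIntegrable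
  have hYint : IntervalIntegrable Y volume 0 (M+1) := hYC.intervalIntegrable
  have hZint : IntervalIntegrable Z volume 0 (M+1) := hZC.intervalIntegrable 0 (M+1)
  -- integration by parts
  have hIBP : (∫ ρ in (0:ℝ)..(M+1), (X ρ + Y ρ)) = 0 := by
    have hF : ∀ x ∈ Set.uIcc (0:ℝ) (M+1),
        HasDerivAt (fun ρ => (h ρ)^2 * ρ / (2 + M - ρ)) (X x + Y x) x := by
      intro x hx
      have hd : HasDerivAt (fun ρ : ℝ => 2 + M - ρ) (-1) x := by
        simpa using (hasDerivAt_id' x).const_sub (2+M)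
      have h1 : HasDerivAt (fun ρ => (h ρ)^2) (2 * h x * deriv h x) x := by
        simpa [mul_comm, mul_assoc, Pi.pow_def] using ((hdiff x).hasDerivAt.pow 2)
      have hn : HasDerivAt (fun ρ => (h ρ)^2 * ρ)
          ((2 * h x * deriv h x) * x + (h x)^2 * 1) x :=
        h1.mul (hasDerivAt_id x)
      have hq := hn.fun_div hd (hsne x hx)
      refine hq.congr_deriv ?_
      have hne := hsne x hx
      simp only [hX, hY]
      set s := 2 + M - x with hs
      field_simp
      ring
    rw [intervalIntegral.integral_eq_sub_of_hasDerivAt hF (hXint.add hYint)]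
    have h1 : h (M+1) = 0 := hvan₀ _ hc₀M.le
    simp [h1]
  have hsplit : (∫ ρ in (0:ℝ)..(M+1), X ρ) = - ∫ ρ in (0:ℝ)..(M+1), Y ρ := by
    have := intervalIntegral.integral_add hXint hYint
    rw [this] at hIBP
    linarith
  -- pointwise bound
  have hpt : ∀ x ∈ Set.Icc (0:ℝ) (M+1), -Y x ≤ (1/2) * X x + 2 * Z x := by
    intro x hx
    have hs1 : (1:ℝ) ≤ 2 + M - x := by nlinarith [hx.1, hx.2]
    have hs0 : (0:ℝ) < 2 + M - x := by linarith
    have hx0 : (0:ℝ) ≤ x := hx.1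
    set a := h x with ha
    set b := deriv h x with hb
    set s := 2 + M - x with hsdef
    have e1 : -Y x = (-(2*a*b*x + a^2) * s) / s^2 := by
      simp only [hY, ← ha, ← hb, ← hsdef]
      field_simp
    have e2 : (1/2) * X x + 2 * Z x = ((1/2)*a^2*x + 2*b^2*x*s^2) / s^2 := by
      simp only [hX, hZ, ← ha, ← hb, ← hsdef]
      field_simp
    rw [e1, e2, div_le_div_iff_of_pos_right (by positivity)]
    clear_value a b s
    nlinarith [mul_nonneg hx0 (sq_nonneg (a + 2*b*s)), mul_nonneg (sq_nonneg a) hs0.le]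
  have hA4 : (∫ ρ in (0:ℝ)..(M+1), X ρ) ≤ 4 * ∫ ρ in (0:ℝ)..(M+1), Z ρ := by
    have hmono : (∫ ρ in (0:ℝ)..(M+1), -Y ρ)
        ≤ ∫ ρ in (0:ℝ)..(M+1), ((1/2) * X ρ + 2 * Z ρ) := by
      apply intervalIntegral.integral_mono_on hM1 hYint.neg
        ((hXint.const_mul _).add (hZint.const_mul _))
      exact hpt
    rw [intervalIntegral.integral_neg] at hmono
    rw [intervalIntegral.integral_add (hXint.const_mul _) (hZint.const_mul _),
      intervalIntegral.integral_const_mul, intervalIntegral.integral_const_mul] at hmono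
    linarith [hsplit, hmono]
  -- compare interval integral of Z with integral over Ioi 0
  have hZIoi : IntegrableOn Z (Set.Ioi (0:ℝ)) volume := by
    have hunion : Set.Ioc (0:ℝ) (M+1) ∪ Set.Ioi (M+1) = Set.Ioi (0:ℝ) :=
      Set.Ioc_union_Ioi_eq_Ioi hM1
    rw [← hunion]
    apply IntegrableOn.union
    · exact hZC.integrableOn_Ioc
    · have hEq : Set.EqOn Z (fun _ => (0:ℝ)) (Set.Ioi (M+1)) := by
        intro x hx
        simp only [hZ]
        rw [hderiv0 x (lt_trans hc₀M hx)]
        ring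
      exact (integrableOn_congr_fun hEq measurableSet_Ioi).mpr (integrableOn_zero)
  have hZle : (∫ ρ in (0:ℝ)..(M+1), Z ρ) ≤ ∫ ρ in Set.Ioi (0:ℝ), Z ρ := by
    rw [intervalIntegral.integral_of_le hM1]
    apply setIntegral_mono_set hZIoi
    · filter_upwards [ae_restrict_mem measurableSet_Ioi] with x hx
      exact mul_nonneg (sq_nonneg _) hx.le
    · exact HasSubset.Subset.eventuallyLE Set.Ioc_subset_Ioi_self
  calc (∫ ρ in (0:ℝ)..(M+1), X ρ) ≤ 4 * ∫ ρ in (0:ℝ)..(M+1), Z ρ := hA4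
    _ ≤ 4 * ∫ ρ in Set.Ioi (0:ℝ), Z ρ := by linarith
end

section
/- Let ω₀ = -1, ω_i = x_i/|x| for i=1,2, and T_i = ω_i ∂_t + ∂_i (with T₀ = 0). Suppose constant coefficients g^{kij} (indices k,i,j ∈ {0,1,2}, symmetric in i,j) satisfy the null condition g^{kij} ω_k ω_i ω_j = 0 for every null vector ω = (-1, cos θ, sin θ). Then for all smooth f, h and all x ≠ 0: g^{kij} ∂_k f ∂_{ij} h = g^{kij} (T_k f ∂_{ij} h - ω_k ∂_t f T_i ∂_j h + ω_k ω_i ∂_t f T_j ∂_t h), using the Einstein summation convention. -/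
noncomputable section

/-- Partial derivative `∂_i` on (2+1)-dimensional spacetime, `i = 0` being time. -/
def pd (i : Fin 3) (f : (Fin 3 → ℝ) → ℝ) : (Fin 3 → ℝ) → ℝ :=
  fun x => fderiv ℝ f x (Pi.single i 1)

/-- Spatial radius `r = |x|`. -/
def rr (x : Fin 3 → ℝ) : ℝ := Real.sqrt ((x 1)^2 + (x 2)^2)

/-- `ω₀ = -1`, `ωᵢ = xᵢ/r` for `i = 1,2`. -/
def omg (x : Fin 3 → ℝ) : Fin 3 → ℝ := ![(-1 : ℝ), x 1 / rr x, x 2 / rr x]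

/-- Good derivatives `T_i = ω_i ∂_t + ∂_i` (note `T₀ = 0`). -/
def Tgood (i : Fin 3) (f : (Fin 3 → ℝ) → ℝ) : (Fin 3 → ℝ) → ℝ :=
  fun x => omg x i * pd 0 f x + pd i f x

/-- The null vector `(-1, cos θ, sin θ)`. -/
def nullv (θ : ℝ) : Fin 3 → ℝ := ![(-1 : ℝ), Real.cos θ, Real.sin θ]

lemma pd_eq_snd (h : (Fin 3 → ℝ) → ℝ) (hh : ContDiff ℝ (⊤ : ℕ∞) h) (x : Fin 3 → ℝ) (i j : Fin 3) :
    pd i (pd j h) x = fderiv ℝ (fderiv ℝ h) x (Pi.single i 1) (Pi.single j 1) := by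
  have hd : DifferentiableAt ℝ (fderiv ℝ h) x := by
    have : ContDiff ℝ 1 (fderiv ℝ h) := (hh.fderiv_right (by norm_cast))
    exact this.differentiable one_ne_zero x
  have := ((ContinuousLinearMap.apply ℝ ℝ (Pi.single j 1 : Fin 3 → ℝ)).hasFDerivAt.comp x
    hd.hasFDerivAt).fderiv
  show fderiv ℝ (pd j h) x (Pi.single i 1) = _
  rw [show pd j h = ⇑(ContinuousLinearMap.apply ℝ ℝ (Pi.single j 1 : Fin 3 → ℝ)) ∘ fderiv ℝ h
    from rfl, this]
  rfl

lemma pd_symm (h : (Fin 3 → ℝ) → ℝ) (hh : ContDiff ℝ (⊤ : ℕ∞) h) (x : Fin 3 → ℝ) (i j : Fin 3) :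
    pd i (pd j h) x = pd j (pd i h) x := by
  rw [pd_eq_snd h hh x i j, pd_eq_snd h hh x j i]
  exact hh.contDiffAt.isSymmSndFDerivAt (by rw [minSmoothness_of_isRCLikeNormedField]; norm_cast) _ _

lemma omg_eq_nullv (x : Fin 3 → ℝ) (hx : rr x ≠ 0) : ∃ θ : ℝ, nullv θ = omg x := by
  set z : ℂ := ⟨x 1 / rr x, x 2 / rr x⟩ with hz
  have hr : (0:ℝ) ≤ (x 1)^2 + (x 2)^2 := by positivity
  have hr2 : rr x ^ 2 = (x 1)^2 + (x 2)^2 := Real.sq_sqrt hr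
  have habs : ‖z‖ = 1 := by
    have : ‖z‖ = Real.sqrt ((x 1 / rr x)^2 + (x 2 / rr x)^2) := by
      rw [Complex.norm_def, Complex.normSq_apply]; norm_num [hz, sq]
    rw [this]
    have : (x 1 / rr x)^2 + (x 2 / rr x)^2 = 1 := by
      rw [div_pow, div_pow, ← add_div, ← hr2, div_self (pow_ne_zero 2 hx)]
    rw [this, Real.sqrt_one]
  have hz0 : z ≠ 0 := by
    intro h0; rw [h0] at habs; simp at habs
  refine ⟨Complex.arg z, ?_⟩
  have hc : Real.cos (Complex.arg z) = x 1 / rr x := by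
    rw [Complex.cos_arg hz0, habs]; simp [hz]
  have hs : Real.sin (Complex.arg z) = x 2 / rr x := by
    rw [Complex.sin_arg, habs]; simp [hz]
  funext i
  fin_cases i <;> simp [nullv, omg, hc, hs]

/-- Null-form decomposition identity:
`g^{kij} ∂_k f ∂_{ij} h = g^{kij}(T_k f ∂_{ij}h - ω_k ∂_t f T_i ∂_j h + ω_k ω_i ∂_t f T_j ∂_t h)`. -/
theorem null_form_decomposition (g : Fin 3 → Fin 3 → Fin 3 → ℝ)
    (hsym : ∀ k i j, g k i j = g k j i)
    (hnull : ∀ θ : ℝ,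
      ∑ k, ∑ i, ∑ j, g k i j * nullv θ k * nullv θ i * nullv θ j = 0)
    (f h : (Fin 3 → ℝ) → ℝ)
    (hf : ContDiff ℝ (⊤ : ℕ∞) f) (hh : ContDiff ℝ (⊤ : ℕ∞) h)
    (x : Fin 3 → ℝ) (hx : rr x ≠ 0) :
    ∑ k, ∑ i, ∑ j, g k i j * pd k f x * pd i (pd j h) x
      = ∑ k, ∑ i, ∑ j, g k i j *
          (Tgood k f x * pd i (pd j h) x
            - omg x k * pd 0 f x * Tgood i (pd j h) x
            + omg x k * omg x i * pd 0 f x * Tgood j (pd 0 h) x) := by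
  obtain ⟨θ, hθ⟩ := omg_eq_nullv x hx
  have hw := hnull θ
  rw [hθ] at hw
  have hb1 : pd 1 (pd 0 h) x = pd 0 (pd 1 h) x := pd_symm h hh x 1 0
  have hb2 : pd 2 (pd 0 h) x = pd 0 (pd 2 h) x := pd_symm h hh x 2 0
  have h0 : omg x 0 = -1 := by simp [omg]
  simp only [Tgood, Fin.sum_univ_three] at hw ⊢
  rw [h0] at hw ⊢
  rw [hb1, hb2]
  linear_combination (-(pd 0 f x * pd 0 (pd 0 h) x)) * hw

end
end
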